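/- If Σ_{k=0}^∞ 1/a_k = ∞, then the Jacobi operator J is essentially self-adjoint. -/

import Mathlib

/-!
Write `τ` for the Jacobi expression and `W_n(u, v) = conj u_{n+1} v_n - conj u_n v_{n+1}`.
Summation by parts gives Green's formula
`∑_{k ≤ n} (conj (τu)_k v_k - conj u_k (τv)_k) = a_n W_n(u, v)`.
For `u, v ∈ ℓ²` the sequence `W_n(u, v)` is absolutely summable, so if moreover `τu, τv ∈ ℓ²`,
then `a_n W_n(u, v)` converges to some `L`, and `L ≠ 0` would give `1 / a_n = O(|W_n(u, v)|)`,
contradicting `∑ 1 / a_n = ∞`. Hence `τ` is symmetric on all of `{u ∈ ℓ² | τu ∈ ℓ²}`.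
Pairing with the unit vectors shows that `J*` acts by `τ`, so `J*` is symmetric as well;
together with `J ⊆ J*` this forces `J** = J*`.
-/

open MeasureTheory

noncomputable section

instance : Fact ((1 : ENNReal) ≤ 2) := ⟨one_le_two⟩

/-- The Hilbert space `ℓ²(ℤ≥0)`. -/
abbrev JacobiH : Type := lp (fun _ : ℕ => ℂ) 2

/-- The submodule of finitely supported elements of `ℓ²(ℤ≥0)`. -/
def finSupp : Submodule ℂ JacobiH where
  carrier := {f | (Function.support (f : ℕ → ℂ)).Finite}
  zero_mem' := by
    have : Function.support ((0 : JacobiH) : ℕ → ℂ) = ∅ := by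
      ext x
      simp only [Function.mem_support, Set.mem_empty_iff_false, iff_false, not_not]
      rfl
    show (Function.support ((0 : JacobiH) : ℕ → ℂ)).Finite
    rw [this]
    exact Set.finite_empty
  add_mem' := by
    intro f g hf hg
    refine (hf.union hg).subset fun x hx => ?_
    by_contra hc
    simp only [Set.mem_union, Function.mem_support, not_or, not_not] at hc
    exact hx (by simp only [Function.mem_support, not_not, lp.coeFn_add, Pi.add_apply,
      hc.1, hc.2, add_zero])
  smul_mem' := by
    intro c f hf
    refine hf.subset fun x hx => ?_
    by_contra hc
    simp only [Function.mem_support, not_not] at hc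
    exact hx (by simp only [Function.mem_support, not_not, lp.coeFn_smul, Pi.smul_apply,
      hc, smul_zero])

/-- The formal Jacobi (tridiagonal) expression with coefficients `a`, `b`, using the
conventions `a_{-1} = 0`, `v_{-1} = 0`. -/
def jacobiApply (a b : ℕ → ℝ) (v : ℕ → ℂ) : ℕ → ℂ
  | 0 => (a 0 : ℂ) * v 1 + (b 0 : ℂ) * v 0
  | (k + 1) => (a (k + 1) : ℂ) * v (k + 2) + (b (k + 1) : ℂ) * v (k + 1) + (a k : ℂ) * v k


open Filter Topology
open scoped ComplexConjugate LinearPMap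

namespace LinearPMap

variable {𝕜 E F : Type*} [RCLike 𝕜] [NormedAddCommGroup E] [InnerProductSpace 𝕜 E]
  [CompleteSpace E] [NormedAddCommGroup F] [InnerProductSpace 𝕜 F]

theorem adjoint_le_adjoint {S T : E →ₗ.[𝕜] F} (hS : Dense (S.domain : Set E)) (h : S ≤ T) :
    T† ≤ S† :=
  IsFormalAdjoint.le_adjoint hS fun x y => by
    rw [h.2 (x := x) (y := Submodule.inclusion h.1 x) rfl]
    exact (adjoint_isFormalAdjoint (hS.mono h.1)).symm (Submodule.inclusion h.1 x) y

theorem adjoint_adjoint_eq_adjoint {T : E →ₗ.[𝕜] E} (hT : Dense (T.domain : Set E))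
    (hsymm : T.IsFormalAdjoint T) (hsymm' : T†.IsFormalAdjoint T†) : T†† = T† :=
  have hle : T ≤ T† := hsymm.le_adjoint hT
  le_antisymm (adjoint_le_adjoint hT hle) (hsymm'.le_adjoint (hT.mono hle.1))

end LinearPMap

theorem lp.summable_norm_sq {α : Type*} {E : α → Type*} [∀ i, NormedAddCommGroup (E i)]
    (f : lp E 2) : Summable fun i => ‖f i‖ ^ 2 := by
  simpa using (lp.memℓp f).summable (by norm_num)

theorem summable_norm_mul_of_summable_norm_sq {ι E F : Type*} [SeminormedAddCommGroup E]
    [SeminormedAddCommGroup F] {f : ι → E} {g : ι → F} (hf : Summable fun i => ‖f i‖ ^ 2)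
    (hg : Summable fun i => ‖g i‖ ^ 2) : Summable fun i => ‖f i‖ * ‖g i‖ :=
  .of_nonneg_of_le (fun i => by positivity)
    (fun i => by nlinarith [two_mul_le_add_sq ‖f i‖ ‖g i‖]) ((hf.add hg).div_const 2)

theorem eq_zero_of_tendsto_smul_of_not_summable_inv {E : Type*} [NormedAddCommGroup E]
    [NormedSpace ℝ E] {a : ℕ → ℝ} {w : ℕ → E} {L : E} (ha : ¬ Summable fun n => (a n)⁻¹)
    (hw : Summable fun n => ‖w n‖) (h : Tendsto (fun n => a n • w n) atTop (𝓝 L)) : L = 0 := by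
  by_contra hL0
  have hL : 0 < ‖L‖ := norm_pos_iff.2 hL0
  refine ha (summable_of_isBigO_nat hw (Asymptotics.IsBigO.of_bound (2 / ‖L‖) ?_))
  filter_upwards [h.norm.eventually (eventually_gt_nhds (half_lt_self hL))] with n hn
  rw [norm_smul] at hn
  have han : 0 < ‖a n‖ := by
    by_contra! h0
    nlinarith [norm_nonneg (a n), norm_nonneg (w n)]
  rw [norm_inv, norm_norm, inv_le_iff_one_le_mul₀ han, div_mul_eq_mul_div, div_mul_eq_mul_div,
    le_div_iff₀ hL]
  nlinarith

def discreteWronskian (u v : ℕ → ℂ) (n : ℕ) : ℂ :=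
  conj (u (n + 1)) * v n - conj (u n) * v (n + 1)

section Jacobi

variable (a b : ℕ → ℝ)

theorem sum_range_conj_jacobiApply_mul_sub (u v : ℕ → ℂ) (n : ℕ) :
    ∑ k ∈ Finset.range (n + 1),
      (conj (jacobiApply a b u k) * v k - conj (u k) * jacobiApply a b v k)
      = a n * discreteWronskian u v n := by
  induction n with
  | zero =>
    simp only [zero_add, Finset.sum_range_one, jacobiApply, discreteWronskian, map_add, map_mul,
      Complex.conj_ofReal]
    ring
  | succ n ih =>
    rw [Finset.sum_range_succ, ih]
    simp only [jacobiApply, discreteWronskian, map_add, map_mul, Complex.conj_ofReal]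
    ring

theorem jacobiApply_eq_zero_of_forall_ge {u : ℕ → ℂ} {N : ℕ} (hu : ∀ i ≥ N, u i = 0) {j : ℕ}
    (hj : N < j) : jacobiApply a b u j = 0 := by
  obtain ⟨m, rfl⟩ : ∃ m, j = m + 1 := Nat.exists_eq_add_one.2 (by omega)
  simp [jacobiApply, hu m (by omega), hu (m + 1) (by omega), hu (m + 2) (by omega)]

theorem sum_range_conj_jacobiApply_mul_of_forall_ge {u : ℕ → ℂ} {N : ℕ} (hu : ∀ i ≥ N, u i = 0)
    (v : ℕ → ℂ) :
    ∑ k ∈ Finset.range (N + 1), conj (jacobiApply a b u k) * v k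
      = ∑ k ∈ Finset.range (N + 1), conj (u k) * jacobiApply a b v k := by
  rw [← sub_eq_zero, ← Finset.sum_sub_distrib, sum_range_conj_jacobiApply_mul_sub,
    discreteWronskian, hu N le_rfl, hu (N + 1) (by omega)]
  simp

end Jacobi

theorem lp.inner_eq_sum_of_forall_notMem {𝕜 ι : Type*} [RCLike 𝕜] {G : ι → Type*}
    [∀ i, NormedAddCommGroup (G i)] [∀ i, InnerProductSpace 𝕜 (G i)] {f : lp G 2} {s : Finset ι}
    (hf : ∀ i ∉ s, f i = 0) (g : lp G 2) : inner 𝕜 f g = ∑ i ∈ s, inner 𝕜 (f i) (g i) := by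
  rw [lp.inner_eq_tsum, tsum_eq_sum fun i hi => by rw [hf i hi, inner_zero_left]]

theorem single_mem_finSupp (i : ℕ) (c : ℂ) : lp.single 2 i c ∈ finSupp :=
  (Set.finite_singleton i).subset fun j hj => by
    by_contra h
    exact hj (lp.single_apply_ne (E := fun _ : ℕ => ℂ) 2 i c h)

theorem dense_finSupp : Dense (finSupp : Set JacobiH) := fun f =>
  mem_closure_of_tendsto (lp.hasSum_single (by norm_num) f)
    (.of_forall fun _ => Submodule.sum_mem _ fun i _ => single_mem_finSupp i (f i))

theorem summable_norm_discreteWronskian (x y : JacobiH) :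
    Summable fun n => ‖discreteWronskian x y n‖ := by
  have hx : Summable fun n => ‖x n‖ ^ 2 := lp.summable_norm_sq x
  have hy : Summable fun n => ‖y n‖ ^ 2 := lp.summable_norm_sq y
  have h1 : Summable fun n => ‖x (n + 1)‖ * ‖y n‖ :=
    summable_norm_mul_of_summable_norm_sq ((summable_nat_add_iff 1).2 hx) hy
  have h2 : Summable fun n => ‖x n‖ * ‖y (n + 1)‖ :=
    summable_norm_mul_of_summable_norm_sq hx ((summable_nat_add_iff 1).2 hy)
  refine .of_nonneg_of_le (fun _ => norm_nonneg _) (fun n => ?_) (h1.add h2)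
  refine (norm_sub_le _ _).trans_eq ?_
  simp only [norm_mul, RCLike.norm_conj]

section Operator

variable {a b : ℕ → ℝ}

theorem inner_jacobiApply_symm (hdiv : ¬ Summable fun k => (a k)⁻¹) {x y fx fy : JacobiH}
    (hfx : ∀ k, fx k = jacobiApply a b x k) (hfy : ∀ k, fy k = jacobiApply a b y k) :
    inner ℂ fx y = inner ℂ x fy := by
  have hsum : HasSum
      (fun k => conj (jacobiApply a b x k) * y k - conj (x k) * jacobiApply a b y k)
      (inner ℂ fx y - inner ℂ x fy) := by
    simpa only [hfx, hfy, RCLike.inner_apply'] using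
      (lp.hasSum_inner (𝕜 := ℂ) fx y).sub (lp.hasSum_inner (𝕜 := ℂ) x fy)
  have hlim : Tendsto (fun n => a n • discreteWronskian x y n) atTop
      (𝓝 (inner ℂ fx y - inner ℂ x fy)) := by
    refine (hsum.tendsto_sum_nat.comp (tendsto_add_atTop_nat 1)).congr fun n => ?_
    simp only [Function.comp_apply, sum_range_conj_jacobiApply_mul_sub, Complex.real_smul]
  exact sub_eq_zero.1 (eq_zero_of_tendsto_smul_of_not_summable_inv hdiv
    (summable_norm_discreteWronskian x y) hlim)

variable {J : JacobiH →ₗ.[ℂ] JacobiH}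

theorem adjoint_apply_eq_jacobiApply (hdom : J.domain = finSupp)
    (hact : ∀ (v : J.domain) (k : ℕ), (J v : ℕ → ℂ) k = jacobiApply a b (v : JacobiH) k)
    (v : J†.domain) (k : ℕ) : (J† v : ℕ → ℂ) k = jacobiApply a b (v : JacobiH) k := by
  classical
  have hd : Dense (J.domain : Set JacobiH) := hdom ▸ dense_finSupp
  let e : J.domain := ⟨lp.single 2 k 1, hdom ▸ single_mem_finSupp k 1⟩
  have he : ∀ i ≥ k + 1, (e : ℕ → ℂ) i = 0 := fun i hi =>
    lp.single_apply_ne (E := fun _ : ℕ => ℂ) 2 k 1 (by omega)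
  have hJe : ∀ i ∉ Finset.range (k + 2), (J e : ℕ → ℂ) i = 0 := fun i hi => by
    rw [hact, jacobiApply_eq_zero_of_forall_ge a b he (by simp at hi; omega)]
  calc (J† v : ℕ → ℂ) k = inner ℂ (e : JacobiH) (J† v) := by
        simp [e, lp.inner_single_left]
    _ = inner ℂ (J e) (v : JacobiH) := ((LinearPMap.adjoint_isFormalAdjoint hd).symm e v).symm
    _ = ∑ i ∈ Finset.range (k + 2), conj (jacobiApply a b e i) * (v : JacobiH) i := by
        simp only [lp.inner_eq_sum_of_forall_notMem hJe, hact, RCLike.inner_apply']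
    _ = ∑ i ∈ Finset.range (k + 2), conj ((e : ℕ → ℂ) i) * jacobiApply a b (v : JacobiH) i :=
        sum_range_conj_jacobiApply_mul_of_forall_ge a b he _
    _ = jacobiApply a b (v : JacobiH) k := by
        rw [Finset.sum_eq_single k (fun i _ hi => by simp [e, hi]) (by simp)]
        simp [e]

end Operator

theorem essentially_selfAdjoint_of_divergent_reciprocals_general (a b : ℕ → ℝ)
    (hdiv : ¬ Summable (fun k : ℕ => (a k)⁻¹))
    (J : JacobiH →ₗ.[ℂ] JacobiH) (hdom : J.domain = finSupp)
    (hact : ∀ (v : J.domain) (k : ℕ),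
      (J v : ℕ → ℂ) k = jacobiApply a b ((v : JacobiH) : ℕ → ℂ) k) :
    J.adjoint.adjoint = J.adjoint :=
  LinearPMap.adjoint_adjoint_eq_adjoint (hdom ▸ dense_finSupp)
    (fun x y => inner_jacobiApply_symm hdiv (hact x) (hact y))
    (fun x y => inner_jacobiApply_symm hdiv (adjoint_apply_eq_jacobiApply hdom hact x)
      (adjoint_apply_eq_jacobiApply hdom hact y))

/-- If `Σ_k 1/a_k = ∞`, then the Jacobi operator `J` (with domain the finitely supported
sequences) is essentially self-adjoint, i.e. `J** = J*`. -/
theorem essentially_selfAdjoint_of_divergent_reciprocals (a b : ℕ → ℝ) (hapos : ∀ k, 0 < a k)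
    (hdiv : ¬ Summable (fun k : ℕ => (a k)⁻¹))
    (J : JacobiH →ₗ.[ℂ] JacobiH) (hdom : J.domain = finSupp)
    (hact : ∀ (v : J.domain) (k : ℕ),
      (J v : ℕ → ℂ) k = jacobiApply a b ((v : JacobiH) : ℕ → ℂ) k) :
    J.adjoint.adjoint = J.adjoint :=
  essentially_selfAdjoint_of_divergent_reciprocals_general a b hdiv J hdom hact
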